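/- arXiv:1302.6863 — 2 statements merged into one kernel-verified Lean document; each statement's English description precedes it below -/
import Mathlib

section
/- For all t, d ∈ ℕ, the Exact Cycle problem has finite integer index on graphs of treedepth at most d: there exists a finite set 𝓡 of t-boundaried graphs such that every t-boundaried graph G whose underlying graph has treedepth at most d satisfies G ≡_{EC,t} R for some R ∈ 𝓡. -/
/-- `td(G) ≤ h`: there is a rooted forest on `V(G)` (given by a parent function together
with a consistent depth function) of height at most `h` such that every edge of `G`
joins two vertices in ancestor–descendant relation. -/
def treedepthLE {V : Type*} (G : SimpleGraph V) (h : ℕ) : Prop :=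
  ∃ (par : V → V) (dep : V → ℕ),
    (∀ v, (par v = v → dep v = 1) ∧ (par v ≠ v → dep v = dep (par v) + 1)) ∧
    (∀ v, dep v ≤ h) ∧
    (∀ u w, G.Adj u w → (∃ n, par^[n] w = u) ∨ (∃ n, par^[n] u = w))

/-- A `t`-boundaried graph: a finite simple graph with `t` distinguished vertices
labeled injectively by `1,…,t`. -/
structure BGraph (t : ℕ) : Type 1 where
  V : Type
  fin : Fintype V
  G : SimpleGraph V
  b : Fin t → V
  binj : Function.Injective b

/-- The underlying relation of the glued graph `G₁ ⊕ G₂`. -/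
def glueAdj {t : ℕ} (G₁ G₂ : BGraph t) :
    G₁.V ⊕ {v : G₂.V // v ∉ Set.range G₂.b} →
    G₁.V ⊕ {v : G₂.V // v ∉ Set.range G₂.b} → Prop
  | Sum.inl u, Sum.inl v =>
      G₁.G.Adj u v ∨ ∃ i j, u = G₁.b i ∧ v = G₁.b j ∧ G₂.G.Adj (G₂.b i) (G₂.b j)
  | Sum.inl u, Sum.inr v => ∃ i, u = G₁.b i ∧ G₂.G.Adj (G₂.b i) v.1
  | Sum.inr _, Sum.inl _ => False
  | Sum.inr u, Sum.inr v => G₂.G.Adj u.1 v.1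

/-- The glued graph `G₁ ⊕ G₂`. -/
def glue {t : ℕ} (G₁ G₂ : BGraph t) :
    SimpleGraph (G₁.V ⊕ {v : G₂.V // v ∉ Set.range G₂.b}) :=
  SimpleGraph.fromRel (glueAdj G₁ G₂)

/-- `G` contains a simple cycle with exactly `ℓ` edges. -/
def HasCycleEQ {W : Type*} (G : SimpleGraph W) (ℓ : ℤ) : Prop :=
  ∃ (u : W) (p : G.Walk u u), p.IsCycle ∧ (p.length : ℤ) = ℓ

/-- Equivalence of `t`-boundaried graphs for the Exact Cycle problem. -/
def ECEquiv {t : ℕ} (G₁ G₂ : BGraph t) : Prop :=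
  ∃ Δ : ℤ, ∀ (H : BGraph t) (ℓ : ℤ),
    HasCycleEQ (glue G₁ H) ℓ ↔ HasCycleEQ (glue G₂ H) (ℓ + Δ)


/-!
The profile of a boundaried graph `G` records which patterns of vertex-disjoint paths between
labelled boundary vertices, with prescribed lengths, `G` contains, and which cycle lengths. A
cycle of `G ⊕ H` either lies in `G`, or it splits into pieces in `H` and maximal runs of
`G`-edges; the runs form such a path pattern of `G`, and replacing them by paths of `G'` with the
same pattern gives a cycle of the same length in `G' ⊕ H`. Hence boundaried graphs with equal
profiles are equivalent with `Δ = 0`. If `td(G) ≤ d`, every path of `G` has fewer than `2 ^ d`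
vertices, so only finitely many profiles occur.
-/

open Function SimpleGraph

namespace SimpleGraph

variable {V : Type*} {G : SimpleGraph V}

def cycleLengths (G : SimpleGraph V) : Set ℕ :=
  {n | ∃ (u : V) (p : G.Walk u u), p.IsCycle ∧ p.length = n}

theorem hasCycleEQ_iff {ℓ : ℤ} : HasCycleEQ G ℓ ↔ ∃ n ∈ G.cycleLengths, (n : ℤ) = ℓ :=
  ⟨fun ⟨u, p, hp, hl⟩ => ⟨_, ⟨u, p, hp, rfl⟩, hl⟩,
    fun ⟨_, ⟨u, p, hp, hn⟩, hl⟩ => ⟨u, p, hp, hn ▸ hl⟩⟩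

theorem three_le_of_mem_cycleLengths {n : ℕ} (hn : n ∈ G.cycleLengths) : 3 ≤ n := by
  obtain ⟨u, p, hp, rfl⟩ := hn
  exact hp.three_le_length

theorem mem_cycleLengths_iff {n : ℕ} (hn : 3 ≤ n) :
    n ∈ G.cycleLengths ↔ ∃ f : ZMod n → V, Injective f ∧ ∀ i, G.Adj (f i) (f (i + 1)) := by
  obtain ⟨m, rfl⟩ : ∃ m, n = m + 3 := ⟨n - 3, by omega⟩
  rw [cycleLengths, Set.mem_ofPred_eq, ← cycleGraph_isContained_iff (by omega)]
  constructor
  · rintro ⟨c⟩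
    exact ⟨c.toHom, c.injective,
      fun i => c.toHom.map_adj (cycleGraph_adj.mpr (Or.inr (add_sub_cancel_left i 1)))⟩
  · rintro ⟨f, hf, hadj⟩
    refine ⟨⟨⟨f, fun {u v} huv => ?_⟩, hf⟩⟩
    rcases cycleGraph_adj.mp huv with h | h
    · rw [sub_eq_iff_eq_add'] at h
      exact h ▸ (hadj v).symm
    · rw [sub_eq_iff_eq_add'] at h
      exact h ▸ hadj u

end SimpleGraph

section Treedepth

variable {V : Type*} {par : V → V} {dep : V → ℕ}

def IsAncestor (par : V → V) (u v : V) : Prop := ∃ k, par^[k] v = u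

theorem IsAncestor.refl (par : V → V) (v : V) : IsAncestor par v v := ⟨0, rfl⟩

theorem IsAncestor.trans {u v w : V} (huv : IsAncestor par u v) (hvw : IsAncestor par v w) :
    IsAncestor par u w := by
  obtain ⟨k, rfl⟩ := huv
  obtain ⟨l, rfl⟩ := hvw
  exact ⟨k + l, iterate_add_apply par k l w⟩

theorem IsAncestor.total {u v w : V} (hu : IsAncestor par u w) (hv : IsAncestor par v w) :
    IsAncestor par u v ∨ IsAncestor par v u := by
  obtain ⟨k, rfl⟩ := hu
  obtain ⟨l, rfl⟩ := hv
  rcases le_total k l with h | h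
  · right
    exact ⟨l - k, by rw [← iterate_add_apply, Nat.sub_add_cancel h]⟩
  · left
    exact ⟨k - l, by rw [← iterate_add_apply, Nat.sub_add_cancel h]⟩

variable (hpd : ∀ v, (par v = v → dep v = 1) ∧ (par v ≠ v → dep v = dep (par v) + 1))
include hpd

theorem one_le_dep (v : V) : 1 ≤ dep v := by
  by_cases h : par v = v
  · exact ((hpd v).1 h).ge
  · rw [(hpd v).2 h]
    omega

theorem IsAncestor.dep_lt {u v : V} (h : IsAncestor par u v) (hne : u ≠ v) : dep u < dep v := by
  obtain ⟨k, rfl⟩ := h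
  induction k generalizing v with
  | zero => exact absurd rfl hne
  | succ k ih =>
    rw [iterate_succ_apply] at hne ⊢
    by_cases hv : par v = v
    · rw [hv] at hne ⊢
      exact ih hne
    · rw [(hpd v).2 hv]
      by_cases hk : par^[k] (par v) = par v
      · rw [hk]
        omega
      · have := ih hk
        omega

variable {G : SimpleGraph V}
  (hedge : ∀ u w, G.Adj u w → IsAncestor par u w ∨ IsAncestor par w u)
include hedge

theorem IsAncestor.of_adj {v x y : V} (hxy : G.Adj x y) (hvx : IsAncestor par v x)
    (hd : dep v ≤ dep y) : IsAncestor par v y := by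
  rcases hedge x y hxy with hx | hy
  · exact hvx.trans hx
  · rcases hvx.total hy with h | h
    · exact h
    · by_cases hv : y = v
      · exact hv ▸ IsAncestor.refl par y
      · exact absurd (h.dep_lt hpd hv) (by omega)

theorem IsAncestor.of_chain {v : V} {N : ℕ} {c : ℕ → V}
    (hadj : ∀ r, r + 1 < N → G.Adj (c r) (c (r + 1))) (hdep : ∀ r < N, dep v ≤ dep (c r))
    (h0 : IsAncestor par v (c 0)) : ∀ r < N, IsAncestor par v (c r) := by
  intro r hr
  induction r with
  | zero => exact h0
  | succ r ih => exact (ih (by omega)).of_adj hpd hedge (hadj r hr) (hdep _ hr)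

theorem IsAncestor.of_dep_min {N j : ℕ} {c : ℕ → V}
    (hadj : ∀ r, r + 1 < N → G.Adj (c r) (c (r + 1))) (hj : j < N)
    (hmin : ∀ r < N, dep (c j) ≤ dep (c r)) : ∀ r < N, IsAncestor par (c j) (c r) := by
  have hleft := IsAncestor.of_chain hpd hedge (N := j + 1) (c := fun r => c (j - r))
    (fun r hr => by
      have := (hadj (j - (r + 1)) (by omega)).symm
      rwa [show j - (r + 1) + 1 = j - r by omega] at this)
    (fun r _ => hmin _ (by omega)) (IsAncestor.refl par _)
  have hright := IsAncestor.of_chain hpd hedge (N := N - j) (c := fun r => c (j + r))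
    (fun r hr => hadj (j + r) (by omega)) (fun r _ => hmin _ (by omega)) (IsAncestor.refl par _)
  intro r hr
  rcases le_total r j with hrj | hrj
  · simpa [Nat.sub_sub_self hrj] using hleft (j - r) (by omega)
  · simpa [Nat.add_sub_cancel' hrj] using hright (r - j) (by omega)

/-- Removing the shallowest vertex of a path leaves two paths that lie strictly deeper, since that
vertex is an ancestor of the whole path. -/
theorem lt_two_pow_of_chain {h : ℕ} (hh : ∀ v, dep v ≤ h) (k N : ℕ) (c : ℕ → V)
    (hadj : ∀ r, r + 1 < N → G.Adj (c r) (c (r + 1))) (hinj : Set.InjOn c (Set.Iio N))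
    (hdep : ∀ r < N, h < dep (c r) + k) : N < 2 ^ k := by
  induction k generalizing N c with
  | zero =>
    by_contra hN
    have := hh (c 0)
    have := hdep 0 (by simp at hN; omega)
    omega
  | succ k ih =>
    rcases Nat.eq_zero_or_pos N with rfl | hN
    · positivity
    obtain ⟨j, hj, hmin⟩ := Finset.exists_min_image (Finset.range N) (fun r => dep (c r))
      ⟨0, Finset.mem_range.mpr hN⟩
    rw [Finset.mem_range] at hj
    have hanc := IsAncestor.of_dep_min hpd hedge hadj hj fun r hr => hmin r (by simpa using hr)
    have hdeeper : ∀ r < N, r ≠ j → h < dep (c r) + k := by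
      intro r hr hrj
      have hne : c j ≠ c r := fun he => hrj (hinj (by simpa using hr) (by simpa using hj) he.symm)
      have := (hanc r hr).dep_lt hpd hne
      have := hdep j hj
      omega
    have hL := ih j c (fun r hr => hadj r (by omega))
      (hinj.mono (Set.Iio_subset_Iio hj.le)) (fun r hr => hdeeper r (by omega) (by omega))
    have hR := ih (N - j - 1) (fun r => c (j + 1 + r)) (fun r hr => hadj (j + 1 + r) (by omega))
      (fun r hr r' hr' he => by
        have := hinj (show j + 1 + r < N by simp at hr; omega)
          (show j + 1 + r' < N by simp at hr'; omega) he
        omega)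
      (fun r hr => hdeeper _ (by omega) (by omega))
    rw [pow_succ]
    omega

end Treedepth

theorem treedepthLE.lt_two_pow {V : Type*} {G : SimpleGraph V} {h N : ℕ} (htd : treedepthLE G h)
    {c : ℕ → V} (hadj : ∀ r, r + 1 < N → G.Adj (c r) (c (r + 1)))
    (hinj : Set.InjOn c (Set.Iio N)) : N < 2 ^ h := by
  obtain ⟨par, dep, hpd, hh, hedge⟩ := htd
  exact lt_two_pow_of_chain hpd hedge hh h N c hadj hinj
    (fun r _ => by have := one_le_dep hpd (c r); omega)

section Runs

/-! Positions `i` of a cyclic sequence with `P i` are read as steps from `i` to `i + 1`; a run is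
a maximal block of consecutive such steps. `runLength P i` counts the steps of the block that
starts at `i`, and `runOffset P i` the steps of the block leading into `i`; both are junk (`0`)
when `P` holds everywhere. -/

variable {n : ℕ} (P : ZMod n → Prop)

noncomputable def runLength (i : ZMod n) : ℕ := sInf {k : ℕ | ¬ P (i + k)}

noncomputable def runOffset (i : ZMod n) : ℕ := sInf {k : ℕ | ¬ P (i - k - 1)}

noncomputable def runStart (i : ZMod n) : ZMod n := i - runOffset P i

variable {P} {i s : ZMod n} {k r : ℕ}

theorem of_lt_runLength (h : k < runLength P i) : P (i + k) :=
  not_not.mp (Nat.notMem_of_lt_sInf h)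

theorem of_lt_runOffset (h : k < runOffset P i) : P (i - k - 1) :=
  not_not.mp (Nat.notMem_of_lt_sInf h)

theorem runStart_add_runOffset (i : ZMod n) : runStart P i + runOffset P i = i :=
  sub_add_cancel i _

theorem runOffset_add (hs : ¬ P (s - 1)) (hr : r ≤ runLength P s) : runOffset P (s + r) = r := by
  refine IsLeast.csInf_eq ⟨by simpa using hs, fun k hk => ?_⟩
  by_contra! hkr
  obtain ⟨m, rfl⟩ := Nat.exists_eq_add_of_lt hkr
  apply hk
  convert of_lt_runLength (P := P) (i := s) (k := m) (by omega) using 2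
  push_cast
  ring

theorem runOffset_eq_zero (hs : ¬ P (s - 1)) : runOffset P s = 0 := by
  simpa using runOffset_add (r := 0) hs (Nat.zero_le _)

theorem runStart_eq_self (hs : ¬ P (s - 1)) : runStart P s = s := by
  rw [runStart, runOffset_eq_zero hs, Nat.cast_zero, sub_zero]

theorem runStart_add (hs : ¬ P (s - 1)) (hr : r ≤ runLength P s) : runStart P (s + r) = s := by
  rw [runStart, runOffset_add hs hr, add_sub_cancel_right]

variable [NeZero n] (hP : ∃ j, ¬ P j)
include hP

theorem not_runLength (i : ZMod n) : ¬ P (i + runLength P i) := by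
  obtain ⟨j, hj⟩ := hP
  refine Nat.sInf_mem (s := {k : ℕ | ¬ P (i + k)}) ⟨(j - i).val, ?_⟩
  simpa [ZMod.natCast_zmod_val] using hj

theorem not_runStart_sub_one (i : ZMod n) : ¬ P (runStart P i - 1) := by
  obtain ⟨j, hj⟩ := hP
  refine Nat.sInf_mem (s := {k : ℕ | ¬ P (i - k - 1)}) ⟨(i - j - 1).val, ?_⟩
  convert hj using 2
  rw [ZMod.natCast_zmod_val]
  ring

theorem runOffset_le_runLength (i : ZMod n) : runOffset P i ≤ runLength P (runStart P i) := by
  by_contra! h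
  obtain ⟨m, hm⟩ := Nat.exists_eq_add_of_lt h
  apply not_runLength hP (runStart P i)
  convert of_lt_runOffset (P := P) (i := i) (k := m) (by omega) using 2
  conv_rhs => rw [← runStart_add_runOffset (P := P) i, hm]
  push_cast
  ring

theorem runOffset_eq_runLength (hi : ¬ P i) : runOffset P i = runLength P (runStart P i) := by
  refine (runOffset_le_runLength hP i).antisymm (not_lt.mp fun h => hi ?_)
  simpa only [runStart_add_runOffset] using of_lt_runLength h

theorem runOffset_add_one (hi : P i) :
    runStart P (i + 1) = runStart P i ∧ runOffset P (i + 1) = runOffset P i + 1 := by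
  have hlt : runOffset P i < runLength P (runStart P i) :=
    (runOffset_le_runLength hP i).lt_of_ne fun h => by
      have := not_runLength hP (runStart P i)
      rw [← h, runStart_add_runOffset] at this
      exact this hi
  have hi' : i + 1 = runStart P i + (runOffset P i + 1 : ℕ) := by
    rw [Nat.cast_succ, ← add_assoc, runStart_add_runOffset]
  rw [hi', runStart_add (not_runStart_sub_one hP i) hlt,
    runOffset_add (not_runStart_sub_one hP i) hlt]
  exact ⟨rfl, rfl⟩

end Runs

namespace BGraph

variable {t : ℕ}

abbrev Interior (H : BGraph t) : Type := {v : H.V // v ∉ Set.range H.b}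

/-- `P k` is a path from boundary vertex `k` to boundary vertex `j` of length `ℓ` for each
`(k, j, ℓ) ∈ A`, with `P k r` its `r`-th vertex; distinct paths are vertex-disjoint. -/
structure IsLinkage (G : BGraph t) (A : Set (Fin t × Fin t × ℕ)) (P : Fin t → ℕ → G.V) :
    Prop where
  apply_zero : ∀ k j ℓ, (k, j, ℓ) ∈ A → P k 0 = G.b k
  apply_length : ∀ k j ℓ, (k, j, ℓ) ∈ A → P k ℓ = G.b j
  adj : ∀ k j ℓ, (k, j, ℓ) ∈ A → ∀ r < ℓ, G.G.Adj (P k r) (P k (r + 1))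
  eq_of_apply_eq : ∀ k j ℓ k' j' ℓ', (k, j, ℓ) ∈ A → (k', j', ℓ') ∈ A →
    ∀ r ≤ ℓ, ∀ r' ≤ ℓ', P k r = P k' r' → k = k' ∧ r = r'

def Realizes (G : BGraph t) (A : Set (Fin t × Fin t × ℕ)) : Prop := ∃ P, G.IsLinkage A P

def profile (G : BGraph t) : Set (Set (Fin t × Fin t × ℕ)) × Set ℕ :=
  ({A | G.Realizes A}, G.G.cycleLengths)

variable {G₁ G₂ H : BGraph t}

theorem glue_adj_inl_inl {u v : G₁.V} (h : G₁.G.Adj u v) :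
    (glue G₁ H).Adj (Sum.inl u) (Sum.inl v) := by
  rw [glue, SimpleGraph.fromRel_adj]
  exact ⟨fun he => h.ne (Sum.inl_injective he), Or.inl (Or.inl h)⟩

theorem mem_range_of_glue_adj {u : G₁.V} {y : G₁.V ⊕ H.Interior}
    (h : (glue G₁ H).Adj (Sum.inl u) y) (hy : ∀ v, y = Sum.inl v → ¬ G₁.G.Adj u v) :
    u ∈ Set.range G₁.b := by
  rw [glue, SimpleGraph.fromRel_adj] at h
  rcases y with v | v <;> simp only [glueAdj] at h
  · rcases h.2 with (h' | ⟨i, -, rfl, -⟩) | (h' | ⟨-, i, -, rfl, -⟩)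
    · exact absurd h' (hy v rfl)
    · exact ⟨i, rfl⟩
    · exact absurd h'.symm (hy v rfl)
    · exact ⟨i, rfl⟩
  · obtain ⟨i, rfl, -⟩ := h.2.resolve_right id
    exact ⟨i, rfl⟩

def BoundaryCorr (G₁ G₂ H : BGraph t) (x : G₁.V ⊕ H.Interior) (x' : G₂.V ⊕ H.Interior) : Prop :=
  (∃ v, x = Sum.inr v ∧ x' = Sum.inr v) ∨ ∃ k, x = Sum.inl (G₁.b k) ∧ x' = Sum.inl (G₂.b k)

theorem glue_adj_of_boundaryCorr {x y : G₁.V ⊕ H.Interior} {x' y' : G₂.V ⊕ H.Interior}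
    (h : (glue G₁ H).Adj x y) (hxy : ∀ u v, x = Sum.inl u → y = Sum.inl v → ¬ G₁.G.Adj u v)
    (hx : BoundaryCorr G₁ G₂ H x x') (hy : BoundaryCorr G₁ G₂ H y y') :
    (glue G₂ H).Adj x' y' := by
  rw [glue, SimpleGraph.fromRel_adj] at h ⊢
  rcases hx with ⟨v, rfl, rfl⟩ | ⟨k, rfl, rfl⟩ <;> rcases hy with ⟨w, rfl, rfl⟩ | ⟨l, rfl, rfl⟩ <;>
    simp only [glueAdj, ne_eq, Sum.inl.injEq, Sum.inr.injEq, G₁.binj.eq_iff, G₂.binj.eq_iff,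
      exists_eq_left', exists_and_left, false_or, or_false, reduceCtorEq, not_false_eq_true,
      true_and] at h ⊢
  · exact h
  · exact h
  · exact h
  · have hkl := hxy _ _ rfl rfl
    have hlk : ¬ G₁.G.Adj (G₁.b l) (G₁.b k) := fun h' => hkl h'.symm
    tauto

end BGraph

section CycleRuns

open BGraph

variable {t : ℕ} {G₁ G₂ H : BGraph t} {n : ℕ} {f : ZMod n → G₁.V ⊕ H.Interior} {i s : ZMod n}
  {x : G₁.V}

def IsLeftStep (f : ZMod n → G₁.V ⊕ H.Interior) (i : ZMod n) : Prop :=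
  ∃ u v, f i = Sum.inl u ∧ f (i + 1) = Sum.inl v ∧ G₁.G.Adj u v

/-- The labelled endpoints and the lengths of the maximal runs of `G₁`-edges along `f`. -/
def runPattern (f : ZMod n → G₁.V ⊕ H.Interior) : Set (Fin t × Fin t × ℕ) :=
  {(k, j, ℓ) | ∃ s, ¬ IsLeftStep f (s - 1) ∧ f s = Sum.inl (G₁.b k) ∧
    ℓ = runLength (IsLeftStep f) s ∧ f (s + ℓ) = Sum.inl (G₁.b j)}

theorem exists_inl_add {r : ℕ} (hs : f s = Sum.inl x) (hr : r ≤ runLength (IsLeftStep f) s) :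
    ∃ y, f (s + r) = Sum.inl y := by
  rcases r with _ | r
  · exact ⟨x, by simpa using hs⟩
  · obtain ⟨u, v, -, hv, -⟩ := of_lt_runLength (P := IsLeftStep f) (i := s) (k := r) (by omega)
    exact ⟨v, by rw [Nat.cast_succ, ← add_assoc, hv]⟩

theorem realizes_runPattern (hf : Injective f) : G₁.Realizes (runPattern f) := by
  set P : Fin t → ℕ → G₁.V :=
    fun k r => Sum.elim id (fun _ => G₁.b k) (f (invFun f (Sum.inl (G₁.b k)) + r))
  have hrun : ∀ {k j ℓ}, (k, j, ℓ) ∈ runPattern f → ∃ s, ¬ IsLeftStep f (s - 1) ∧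
      f s = Sum.inl (G₁.b k) ∧ ℓ = runLength (IsLeftStep f) s ∧ f (s + ℓ) = Sum.inl (G₁.b j) ∧
      ∀ r ≤ ℓ, f (s + r) = Sum.inl (P k r) := by
    rintro k j ℓ ⟨s, hs, hsk, rfl, hsj⟩
    refine ⟨s, hs, hsk, rfl, hsj, fun r hr => ?_⟩
    obtain ⟨y, hy⟩ := exists_inl_add hsk hr
    have hinv : invFun f (Sum.inl (G₁.b k)) = s := hsk ▸ leftInverse_invFun hf s
    simp only [P, hinv, hy, Sum.elim_inl, id]
  refine ⟨P, ⟨fun k j ℓ hA => ?_, fun k j ℓ hA => ?_, fun k j ℓ hA r hr => ?_,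
    fun k j ℓ k' j' ℓ' hA hA' r hr r' hr' he => ?_⟩⟩
  · obtain ⟨s, -, hsk, -, -, hP⟩ := hrun hA
    simpa [hsk] using (hP 0 (Nat.zero_le ℓ)).symm
  · obtain ⟨s, -, -, -, hsj, hP⟩ := hrun hA
    exact Sum.inl_injective ((hP ℓ le_rfl).symm.trans hsj)
  · obtain ⟨s, -, -, rfl, -, hP⟩ := hrun hA
    obtain ⟨u, v, hu, hv, huv⟩ := of_lt_runLength hr
    rw [hP r hr.le] at hu
    rw [add_assoc, ← Nat.cast_succ, hP (r + 1) hr] at hv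
    rwa [Sum.inl_injective hu, Sum.inl_injective hv]
  · obtain ⟨s, hs, hsk, rfl, -, hP⟩ := hrun hA
    obtain ⟨s', hs', hsk', rfl, -, hP'⟩ := hrun hA'
    have hpos : s + r = s' + r' := hf (by rw [hP r hr, hP' r' hr', he])
    have hrr : r = r' := by
      rw [← runOffset_add hs hr, ← runOffset_add hs' hr', hpos]
    subst hrr
    have hss : s = s' := add_right_cancel hpos
    subst hss
    exact ⟨G₁.binj (Sum.inl_injective (hsk.symm.trans hsk')), rfl⟩

theorem mem_range_of_not_isLeftStep (hadj : ∀ i, (glue G₁ H).Adj (f i) (f (i + 1)))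
    (hi : ¬ IsLeftStep f i) (hx : f i = Sum.inl x) :
    x ∈ Set.range G₁.b :=
  mem_range_of_glue_adj (hx ▸ hadj i) fun v hv hxv => hi ⟨x, v, hx, hv, hxv⟩

theorem mem_range_of_not_isLeftStep' (hadj : ∀ i, (glue G₁ H).Adj (f i) (f (i + 1)))
    (hi : ¬ IsLeftStep f i) (hx : f (i + 1) = Sum.inl x) :
    x ∈ Set.range G₁.b :=
  mem_range_of_glue_adj (hx ▸ (hadj i).symm) fun v hv hxv => hi ⟨v, x, hv, hx, hxv.symm⟩

variable [NeZero n] (hP : ∃ j, ¬ IsLeftStep f j)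
include hP

theorem exists_inl_runStart (hx : f i = Sum.inl x) :
    ∃ y, f (runStart (IsLeftStep f) i) = Sum.inl y := by
  rcases Nat.eq_zero_or_pos (runOffset (IsLeftStep f) i) with h0 | h0
  · exact ⟨x, by rw [runStart, h0, Nat.cast_zero, sub_zero, hx]⟩
  · obtain ⟨u, -, hu, -, -⟩ := of_lt_runLength (h0.trans_le (runOffset_le_runLength hP i))
    exact ⟨u, by simpa using hu⟩

variable (hadj : ∀ i, (glue G₁ H).Adj (f i) (f (i + 1)))
include hadj

theorem mem_runPattern (hx : f i = Sum.inl x) :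
    ∃ k j, f (runStart (IsLeftStep f) i) = Sum.inl (G₁.b k) ∧
      f (runStart (IsLeftStep f) i + runLength (IsLeftStep f) (runStart (IsLeftStep f) i)) =
        Sum.inl (G₁.b j) ∧
      (k, j, runLength (IsLeftStep f) (runStart (IsLeftStep f) i)) ∈ runPattern f := by
  set s := runStart (IsLeftStep f) i
  have hs := not_runStart_sub_one hP i
  obtain ⟨y, hy⟩ := exists_inl_runStart hP hx
  obtain ⟨k, rfl⟩ := mem_range_of_not_isLeftStep' hadj hs (by rwa [sub_add_cancel])
  obtain ⟨z, hz⟩ := exists_inl_add hy le_rfl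
  obtain ⟨j, rfl⟩ := mem_range_of_not_isLeftStep hadj (not_runLength hP s) hz
  exact ⟨k, j, hy, hz, s, hs, hy, rfl, hz⟩

end CycleRuns

section Replacement

open BGraph

variable {t : ℕ} {G₁ G₂ H : BGraph t} {n : ℕ} {f : ZMod n → G₁.V ⊕ H.Interior} {i : ZMod n}

/-- `g` is the cycle `f` with each maximal run of `G₁`-edges, which starts at the boundary vertex
`k`, replaced by the path `P₂ k` of `G₂`. -/
def IsRunReplacement (P₂ : Fin t → ℕ → G₂.V) (f : ZMod n → G₁.V ⊕ H.Interior)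
    (g : ZMod n → G₂.V ⊕ H.Interior) : Prop :=
  ∀ i, (∀ x k, f i = Sum.inl x → f (runStart (IsLeftStep f) i) = Sum.inl (G₁.b k) →
      g i = Sum.inl (P₂ k (runOffset (IsLeftStep f) i))) ∧
    ∀ v, f i = Sum.inr v → g i = Sum.inr v

variable [NeZero n] (hP : ∃ j, ¬ IsLeftStep f j) (hadj : ∀ i, (glue G₁ H).Adj (f i) (f (i + 1)))
include hP hadj

theorem exists_isRunReplacement (P₂ : Fin t → ℕ → G₂.V) : ∃ g, IsRunReplacement P₂ f g := by
  have : ∀ i, ∃ y : G₂.V ⊕ H.Interior,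
      (∀ x k, f i = Sum.inl x → f (runStart (IsLeftStep f) i) = Sum.inl (G₁.b k) →
        y = Sum.inl (P₂ k (runOffset (IsLeftStep f) i))) ∧
      ∀ v, f i = Sum.inr v → y = Sum.inr v := by
    intro i
    rcases hfi : f i with x | v
    · obtain ⟨k, -, hk, -⟩ := mem_runPattern hP hadj hfi
      refine ⟨Sum.inl (P₂ k (runOffset (IsLeftStep f) i)), fun _ k' _ hk' => ?_, by simp⟩
      rw [G₁.binj (Sum.inl_injective (hk'.symm.trans hk))]
    · exact ⟨Sum.inr v, by simp, by simp⟩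
  choose g hg using this
  exact ⟨g, hg⟩

variable {P₂ : Fin t → ℕ → G₂.V} {g : ZMod n → G₂.V ⊕ H.Interior} (hg : IsRunReplacement P₂ f g)
include hg

theorem exists_eq_inl_of_isRunReplacement {x : G₁.V} (hx : f i = Sum.inl x) :
    ∃ k j, g i = Sum.inl (P₂ k (runOffset (IsLeftStep f) i)) ∧
      f (runStart (IsLeftStep f) i) = Sum.inl (G₁.b k) ∧
      (k, j, runLength (IsLeftStep f) (runStart (IsLeftStep f) i)) ∈ runPattern f := by
  obtain ⟨k, j, hk, -, hA⟩ := mem_runPattern hP hadj hx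
  exact ⟨k, j, (hg i).1 x k hx hk, hk, hA⟩

variable (hP₂ : G₂.IsLinkage (runPattern f) P₂)
include hP₂

theorem boundaryCorr_of_not_isLeftStep (hi : ¬ IsLeftStep f i) :
    BoundaryCorr G₁ G₂ H (f i) (g i) := by
  rcases hfi : f i with x | v
  · obtain ⟨c, rfl⟩ := mem_range_of_not_isLeftStep hadj hi hfi
    obtain ⟨k, j, hk, hend, hA⟩ := mem_runPattern hP hadj hfi
    have hoff := runOffset_eq_runLength hP hi
    rw [← hoff, runStart_add_runOffset, hfi] at hend
    obtain rfl := G₁.binj (Sum.inl_injective hend)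
    rw [(hg i).1 _ k hfi hk, hoff, hP₂.apply_length _ _ _ hA]
    exact Or.inr ⟨c, rfl, rfl⟩
  · exact Or.inl ⟨v, rfl, (hg i).2 v hfi⟩

theorem boundaryCorr_succ_of_not_isLeftStep (hi : ¬ IsLeftStep f i) :
    BoundaryCorr G₁ G₂ H (f (i + 1)) (g (i + 1)) := by
  rcases hfi : f (i + 1) with x | v
  · obtain ⟨c, rfl⟩ := mem_range_of_not_isLeftStep' hadj hi hfi
    have hi' : ¬ IsLeftStep f (i + 1 - 1) := by rwa [add_sub_cancel_right]
    obtain ⟨k, j, hgk, hk, hA⟩ := exists_eq_inl_of_isRunReplacement hP hadj hg hfi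
    rw [runStart_eq_self hi', hfi] at hk
    rw [hgk, runOffset_eq_zero hi', hP₂.apply_zero _ _ _ hA, ← G₁.binj (Sum.inl_injective hk)]
    exact Or.inr ⟨c, rfl, rfl⟩
  · exact Or.inl ⟨v, rfl, (hg (i + 1)).2 v hfi⟩

theorem injective_of_isRunReplacement (hf : Injective f) : Injective g := by
  intro i i' he
  rcases hfi : f i with x | v <;> rcases hfi' : f i' with x' | v'
  · obtain ⟨k, j, hgk, hk, hA⟩ := exists_eq_inl_of_isRunReplacement hP hadj hg hfi
    obtain ⟨k', j', hgk', hk', hA'⟩ := exists_eq_inl_of_isRunReplacement hP hadj hg hfi'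
    rw [hgk, hgk'] at he
    obtain ⟨rfl, hoff⟩ := hP₂.eq_of_apply_eq _ _ _ _ _ _ hA hA' _ (runOffset_le_runLength hP i)
      _ (runOffset_le_runLength hP i') (Sum.inl_injective he)
    rw [← runStart_add_runOffset (P := IsLeftStep f) i,
      ← runStart_add_runOffset (P := IsLeftStep f) i', hf (hk.trans hk'.symm), hoff]
  · obtain ⟨k, j, hgk, -⟩ := exists_eq_inl_of_isRunReplacement hP hadj hg hfi
    rw [hgk, (hg i').2 v' hfi'] at he
    cases he
  · obtain ⟨k, j, hgk, -⟩ := exists_eq_inl_of_isRunReplacement hP hadj hg hfi'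
    rw [hgk, (hg i).2 v hfi] at he
    cases he
  · rw [(hg i).2 v hfi, (hg i').2 v' hfi'] at he
    exact hf (by rw [hfi, hfi', Sum.inr_injective he])

theorem adj_of_isRunReplacement (i : ZMod n) : (glue G₂ H).Adj (g i) (g (i + 1)) := by
  by_cases hi : IsLeftStep f i
  · obtain ⟨hstart, hoff⟩ := runOffset_add_one hP hi
    obtain ⟨u, v, hu, hv, -⟩ := hi
    obtain ⟨k, j, hgk, hk, hA⟩ := exists_eq_inl_of_isRunReplacement hP hadj hg hu
    have hgk' := (hg (i + 1)).1 v k hv (hstart ▸ hk)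
    have hlt := runOffset_le_runLength hP (i + 1)
    rw [hstart, hoff] at hlt
    rw [hoff] at hgk'
    rw [hgk, hgk']
    exact glue_adj_inl_inl (hP₂.adj _ _ _ hA _ hlt)
  · exact glue_adj_of_boundaryCorr (hadj i) (fun u v hu hv huv => hi ⟨u, v, hu, hv, huv⟩)
      (boundaryCorr_of_not_isLeftStep hP hadj hg hP₂ hi)
      (boundaryCorr_succ_of_not_isLeftStep hP hadj hg hP₂ hi)

end Replacement

namespace BGraph

variable {t : ℕ} {G₁ G₂ : BGraph t}

theorem exists_cycle_glue_of_profile_le (hle : G₁.profile ≤ G₂.profile) {H : BGraph t} {n : ℕ}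
    (hn : 3 ≤ n) {f : ZMod n → G₁.V ⊕ H.Interior} (hf : Injective f)
    (hadj : ∀ i, (glue G₁ H).Adj (f i) (f (i + 1))) :
    ∃ g : ZMod n → G₂.V ⊕ H.Interior, Injective g ∧ ∀ i, (glue G₂ H).Adj (g i) (g (i + 1)) := by
  have : NeZero n := ⟨by omega⟩
  by_cases hP : ∃ i, ¬ IsLeftStep f i
  · obtain ⟨P₂, hP₂⟩ := hle.1 (realizes_runPattern hf)
    obtain ⟨g, hg⟩ := exists_isRunReplacement hP hadj P₂
    exact ⟨g, injective_of_isRunReplacement hP hadj hg hP₂ hf,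
      adj_of_isRunReplacement hP hadj hg hP₂⟩
  · push Not at hP
    choose u v hu hv huv using hP
    have hvu : ∀ i, v i = u (i + 1) := fun i => Sum.inl_injective ((hv i).symm.trans (hu _))
    have hn₁ : n ∈ G₁.G.cycleLengths := (mem_cycleLengths_iff hn).mpr
      ⟨u, fun i j h => hf (by rw [hu, hu, h]), fun i => hvu i ▸ huv i⟩
    obtain ⟨w, hw, hwadj⟩ := (mem_cycleLengths_iff hn).mp (hle.2 hn₁)
    exact ⟨Sum.inl ∘ w, Sum.inl_injective.comp hw, fun i => glue_adj_inl_inl (hwadj i)⟩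

theorem cycleLengths_glue_subset (hle : G₁.profile ≤ G₂.profile) (H : BGraph t) :
    (glue G₁ H).cycleLengths ⊆ (glue G₂ H).cycleLengths := by
  intro n hn
  have h3 := three_le_of_mem_cycleLengths hn
  obtain ⟨f, hf, hadj⟩ := (mem_cycleLengths_iff h3).mp hn
  exact (mem_cycleLengths_iff h3).mpr (exists_cycle_glue_of_profile_le hle h3 hf hadj)

theorem ecEquiv_of_profile_eq (h : G₁.profile = G₂.profile) : ECEquiv G₁ G₂ := by
  refine ⟨0, fun H ℓ => ?_⟩
  rw [add_zero, hasCycleEQ_iff, hasCycleEQ_iff,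
    (cycleLengths_glue_subset h.le H).antisymm (cycleLengths_glue_subset h.ge H)]

variable {G : BGraph t} {d : ℕ}

theorem IsLinkage.length_lt_two_pow (htd : treedepthLE G.G d) {A : Set (Fin t × Fin t × ℕ)}
    {P : Fin t → ℕ → G.V} (hP : G.IsLinkage A P) {k j : Fin t} {ℓ : ℕ} (hA : (k, j, ℓ) ∈ A) :
    ℓ < 2 ^ d := by
  have := htd.lt_two_pow (N := ℓ + 1) (c := P k) (fun r hr => hP.adj k j ℓ hA r (by omega))
    fun r hr r' hr' he => (hP.eq_of_apply_eq _ _ _ _ _ _ hA hA r (Nat.lt_succ_iff.mp hr)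
      r' (Nat.lt_succ_iff.mp hr') he).2
  omega

theorem profile_mem_of_treedepthLE (htd : treedepthLE G.G d) :
    G.profile ∈ {X | X ⊆ {A | A ⊆ Set.univ ×ˢ Set.univ ×ˢ Set.Iio (2 ^ d)}} ×ˢ
      {Y | Y ⊆ Set.Iio (2 ^ d)} := by
  refine ⟨fun A ⟨P, hP⟩ => ?_, ?_⟩
  · rintro ⟨k, j, ℓ⟩ hA
    exact ⟨trivial, trivial, hP.length_lt_two_pow htd hA⟩
  · rintro _ ⟨u, p, hp, rfl⟩
    exact htd.lt_two_pow (c := p.getVert) (fun r hr => p.adj_getVert_succ (by omega))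
      (hp.getVert_injOn'.mono fun r hr => by simp only [Set.mem_Iio] at hr; simp; omega)

theorem finite_profile_image (t d : ℕ) :
    (profile '' {G : BGraph t | treedepthLE G.G d}).Finite := by
  refine Set.Finite.subset ?_ fun _ ⟨G, hG, hp⟩ => hp ▸ profile_mem_of_treedepthLE hG
  exact (Set.finite_univ.prod (Set.finite_univ.prod (Set.finite_Iio _))).finite_subsets
    |>.finite_subsets.prod (Set.finite_Iio _).finite_subsets

end BGraph

/-- Exact Cycle has finite integer index on graphs of treedepth at most `d`. -/
theorem exactCycle_finite_integer_index (t d : ℕ) :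
    ∃ R : Set (BGraph t), R.Finite ∧
      ∀ G : BGraph t, treedepthLE G.G d → ∃ R₀ ∈ R, ECEquiv G R₀ := by
  set profiles := BGraph.profile '' {G : BGraph t | treedepthLE G.G d}
  have : Finite profiles := (BGraph.finite_profile_image t d).to_subtype
  have hrep : ∀ p : profiles, ∃ G : BGraph t, G.profile = p := fun ⟨_, G, _, hG⟩ => ⟨G, hG⟩
  choose rep hrep using hrep
  refine ⟨Set.range rep, Set.finite_range rep, fun G hG => ?_⟩
  let p : profiles := ⟨G.profile, G, hG, rfl⟩
  exact ⟨rep p, Set.mem_range_self p, BGraph.ecEquiv_of_profile_eq (hrep p).symm⟩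
end

section
/- Define g : ℕ × ℕ → ℕ by g(0,k) = k and g(i,k) = g(i−1, (k+1)³) for i ≥ 1 (so g(d,k) = O(k^{3^d})). For every d, k ∈ ℕ and every finite simple graph G admitting a set S ⊆ V(G) with |S| ≤ k and td(G − S) ≤ d, there exists an induced subgraph G' of G with |V(G')| ≤ g(d,k) such that for every ℓ ∈ ℕ, G contains a simple path with at least ℓ edges if and only if G' contains a simple path with at least ℓ edges. -/
/-- `G` contains a simple path with at least `ℓ` edges. -/
def HasPathGE {W : Type*} (G : SimpleGraph W) (ℓ : ℕ) : Prop :=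
  ∃ (u v : W) (p : G.Walk u v), p.IsPath ∧ ℓ ≤ p.length

/-- The kernel-size function: `g 0 k = k` and `g (i+1) k = g i ((k+1)³)`. -/
def kernelSize : ℕ → ℕ → ℕ
  | 0, k => k
  | i + 1, k => kernelSize i ((k + 1) ^ 3)

open SimpleGraph

section Forest
variable {W : Type*} {par : W → W} {dep : W → ℕ}

lemma aux_dep_pos (hdep : ∀ v, (par v = v → dep v = 1) ∧ (par v ≠ v → dep v = dep (par v) + 1))
    (v : W) : 1 ≤ dep v := by
  by_cases h : par v = v
  · rw [(hdep v).1 h]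
  · rw [(hdep v).2 h]; omega

lemma aux_anc_dep (hdep : ∀ v, (par v = v → dep v = 1) ∧ (par v ≠ v → dep v = dep (par v) + 1)) :
    ∀ (n : ℕ) (v : W), dep (par^[n] v) ≤ dep v ∧ (par^[n] v ≠ v → dep (par^[n] v) < dep v) := by
  intro n
  induction n with
  | zero => intro v; exact ⟨le_rfl, fun h => absurd rfl h⟩
  | succ n ih =>
    intro v
    rw [Function.iterate_succ_apply']
    by_cases h : par (par^[n] v) = par^[n] v
    · rw [h]
      exact ⟨(ih v).1, fun hne => (ih v).2 hne⟩
    · have h2 := (hdep (par^[n] v)).2 h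
      have hlt : dep (par (par^[n] v)) < dep (par^[n] v) := by omega
      exact ⟨le_trans hlt.le (ih v).1, fun _ => lt_of_lt_of_le hlt (ih v).1⟩

lemma aux_anc_total {x y v : W} (hx : ∃ n, par^[n] v = x) (hy : ∃ m, par^[m] v = y) :
    (∃ n, par^[n] y = x) ∨ (∃ n, par^[n] x = y) := by
  obtain ⟨n, rfl⟩ := hx
  obtain ⟨m, rfl⟩ := hy
  rcases le_total m n with h | h
  · left; exact ⟨n - m, by rw [← Function.iterate_add_apply, Nat.sub_add_cancel h]⟩
  · right; exact ⟨m - n, by rw [← Function.iterate_add_apply, Nat.sub_add_cancel h]⟩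

variable {H : SimpleGraph W}

lemma aux_anc_walk
    (hdep : ∀ v, (par v = v → dep v = 1) ∧ (par v ≠ v → dep v = dep (par v) + 1))
    (hadj : ∀ u w, H.Adj u w → (∃ n, par^[n] w = u) ∨ (∃ n, par^[n] u = w)) {r : W} :
    ∀ {a b : W} (p : H.Walk a b), (∃ n, par^[n] a = r) →
      (∀ v ∈ p.support, dep r ≤ dep v) → ∀ v ∈ p.support, ∃ n, par^[n] v = r := by
  intro a b p
  induction p with
  | nil =>
    intro hra hmin v hv
    rw [Walk.support_nil, List.mem_singleton] at hv
    subst hv; exact hra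
  | @cons a c b h q ih =>
    intro hra hmin
    have hcmem : c ∈ (Walk.cons h q).support := by
      rw [Walk.support_cons]; exact List.mem_cons_of_mem _ q.start_mem_support
    have hrc : ∃ n, par^[n] c = r := by
      rcases hadj a c h with hac | hca
      · obtain ⟨n, hn⟩ := hac
        obtain ⟨m, hm⟩ := hra
        exact ⟨m + n, by rw [Function.iterate_add_apply, hn, hm]⟩
      · rcases aux_anc_total (v := a) hra hca with h1 | h2
        · exact h1
        · by_cases hcr : c = r
          · exact ⟨0, hcr⟩
          · obtain ⟨n, hn⟩ := h2
            have hne : par^[n] r ≠ r := by rw [hn]; exact hcr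
            have := (aux_anc_dep hdep n r).2 hne
            rw [hn] at this
            exact absurd (hmin c hcmem) (by omega)
    intro v hv
    rw [Walk.support_cons, List.mem_cons] at hv
    rcases hv with rfl | hv
    · exact hra
    · exact ih hrc (fun w hw => hmin w (by rw [Walk.support_cons]; exact List.mem_cons_of_mem _ hw)) v hv

lemma lemB
    (hdep : ∀ v, (par v = v → dep v = 1) ∧ (par v ≠ v → dep v = dep (par v) + 1))
    (hadj : ∀ u w, H.Adj u w → (∃ n, par^[n] w = u) ∨ (∃ n, par^[n] u = w)) :
    ∀ (d : ℕ) {a b : W} (p : H.Walk a b) (D : ℕ), p.IsPath →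
      (∀ v ∈ p.support, D < dep v ∧ dep v ≤ D + d) → p.support.length + 1 ≤ 2 ^ d := by
  classical
  intro d
  induction d with
  | zero =>
    intro a b p D _ hwin
    have := hwin a p.start_mem_support
    omega
  | succ d ih =>
    intro a b p D hp hwin
    obtain ⟨r, hrmem, hrmin⟩ : ∃ r ∈ p.support, ∀ v ∈ p.support, dep r ≤ dep v := by
      cases hargmin : p.support.argmin dep with
      | none => exact absurd (List.argmin_eq_none.mp hargmin) p.support_ne_nil
      | some r =>
        exact ⟨r, List.argmin_mem hargmin, fun v hv => List.le_of_mem_argmin hv hargmin⟩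
    have key : ∀ {y : W} (q : H.Walk r y), q.IsPath →
        (∀ v ∈ q.support, v ∈ p.support) → q.support.length ≤ 2 ^ d := by
      intro y q hq hsub
      have hanc : ∀ v ∈ q.support, ∃ n, par^[n] v = r :=
        aux_anc_walk hdep hadj q ⟨0, rfl⟩ (fun v hv => hrmin v (hsub v hv))
      cases q with
      | nil => simpa using Nat.one_le_two_pow
      | @cons r c y h qt =>
        have hqt : qt.IsPath := hq.of_cons
        have hrn : r ∉ qt.support := by
          have := hq.support_nodup
          rw [Walk.support_cons, List.nodup_cons] at this
          exact this.1
        have hbound := ih qt (dep r) hqt ?_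
        · rw [Walk.support_cons, List.length_cons]; omega
        · intro v hv
          have hvp := hsub v (by rw [Walk.support_cons]; exact List.mem_cons_of_mem _ hv)
          have hvr : v ≠ r := fun hh => hrn (hh ▸ hv)
          obtain ⟨n, hn⟩ := hanc v (by rw [Walk.support_cons]; exact List.mem_cons_of_mem _ hv)
          have hne : par^[n] v ≠ v := by rw [hn]; exact fun hh => hvr hh.symm
          have hlt := (aux_anc_dep hdep n v).2 hne
          rw [hn] at hlt
          have hup := (hwin v hvp).2
          have hDr := (hwin r hrmem).1
          exact ⟨hlt, by omega⟩
    have hspec := p.take_spec hrmem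
    have hsupp : p.support = (p.takeUntil r hrmem).support ++ (p.dropUntil r hrmem).support.tail := by
      conv_lhs => rw [← hspec]
      rw [Walk.support_append]
    have hb2 : (p.dropUntil r hrmem).support.length ≤ 2 ^ d :=
      key _ (hp.dropUntil hrmem) (fun v hv => p.support_dropUntil_subset hrmem hv)
    have hb1 : (p.takeUntil r hrmem).support.length ≤ 2 ^ d := by
      have := key (p.takeUntil r hrmem).reverse (hp.takeUntil hrmem).reverse
        (fun v hv => p.support_takeUntil_subset hrmem
          (by rwa [Walk.support_reverse, List.mem_reverse] at hv))
      rwa [Walk.support_reverse, List.length_reverse] at this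
    have hq2len : (p.dropUntil r hrmem).support.tail.length + 1
        = (p.dropUntil r hrmem).support.length := by
      conv_rhs => rw [(p.dropUntil r hrmem).support_eq_cons]
      rw [List.length_cons]
    have hpow : 2 ^ (d + 1) = 2 ^ d + 2 ^ d := by ring
    rw [hsupp, List.length_append]
    omega

end Forest

section Transfer
variable {V : Type*} {G : SimpleGraph V} {T : Set V}

lemma walk_toInduce :
    ∀ {a b : V} (p : G.Walk a b) (hT : ∀ v ∈ p.support, v ∈ T),
      ∃ q : (G.induce T).Walk ⟨a, hT a p.start_mem_support⟩ ⟨b, hT b p.end_mem_support⟩,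
        q.support.map Subtype.val = p.support := by
  intro a b p
  induction p with
  | nil => intro hT; exact ⟨Walk.nil, by simp⟩
  | @cons a c b h q ih =>
    intro hT
    obtain ⟨q', hq'⟩ := ih (fun v hv => hT v (by rw [Walk.support_cons]; exact List.mem_cons_of_mem _ hv))
    have hcT : c ∈ T := hT c (by rw [Walk.support_cons]; exact List.mem_cons_of_mem _ q.start_mem_support)
    have hadj : (G.induce T).Adj ⟨a, hT a (Walk.cons h q).start_mem_support⟩ ⟨c, hcT⟩ := by
      simpa using h
    exact ⟨Walk.cons hadj q', by rw [Walk.support_cons, Walk.support_cons, List.map_cons, hq']⟩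

end Transfer

lemma lemC {V : Type*} {G : SimpleGraph V} {S : Set V} [DecidablePred (· ∈ S)] {E : ℕ}
    (hE : 1 ≤ E)
    (hfree : ∀ {a b : V} (p : G.Walk a b), p.IsPath → (∀ v ∈ p.support, v ∉ S) →
      p.support.length + 1 ≤ E) :
    ∀ (n : ℕ) {a b : V} (p : G.Walk a b), p.length ≤ n → p.IsPath →
      p.support.length + 1 ≤ ((p.support.filter (fun v => v ∈ S)).length + 1) * E := by
  classical
  intro n
  induction n using Nat.strong_induction_on with
  | _ n IH =>
    intro a b p hlen hp
    by_cases hex : ∃ r ∈ p.support, r ∈ S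
    · obtain ⟨r, hrmem, hrS⟩ := hex
      have key : ∀ {y : V} (q : G.Walk r y), q.length ≤ p.length → q.IsPath →
          q.support.length ≤ (q.support.filter (fun v => v ∈ S)).length * E := by
        intro y q hqlen hq
        cases q with
        | nil => simpa [hrS] using hE
        | @cons r c y h qt =>
          have hqt := hq.of_cons
          have hlt : qt.length < n := by
            have : qt.length + 1 ≤ p.length := by simpa using hqlen
            omega
          have hb := IH qt.length hlt qt le_rfl hqt
          rw [Walk.support_cons, List.length_cons, List.filter_cons, if_pos (by simpa using hrS),
            List.length_cons]
          exact hb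
      have hspec := p.take_spec hrmem
      have hsupp : p.support
          = (p.takeUntil r hrmem).support ++ (p.dropUntil r hrmem).support.tail := by
        conv_lhs => rw [← hspec]
        rw [Walk.support_append]
      have hb2 : (p.dropUntil r hrmem).support.length
          ≤ ((p.dropUntil r hrmem).support.filter (fun v => v ∈ S)).length * E :=
        key _ (p.length_dropUntil_le hrmem) (hp.dropUntil hrmem)
      have hb1 : (p.takeUntil r hrmem).support.length
          ≤ ((p.takeUntil r hrmem).support.filter (fun v => v ∈ S)).length * E := by
        have := key (p.takeUntil r hrmem).reverse
          (by rw [Walk.length_reverse]; exact p.length_takeUntil_le hrmem)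
          (hp.takeUntil hrmem).reverse
        rwa [Walk.support_reverse, List.length_reverse, List.filter_reverse,
          List.length_reverse] at this
      have hcons2 : (p.dropUntil r hrmem).support = r :: (p.dropUntil r hrmem).support.tail :=
        (p.dropUntil r hrmem).support_eq_cons
      have h2 : ((p.dropUntil r hrmem).support.filter (fun v => v ∈ S)).length
          = ((p.dropUntil r hrmem).support.tail.filter (fun v => v ∈ S)).length + 1 := by
        conv_lhs => rw [hcons2]
        rw [List.filter_cons, if_pos (by simpa using hrS), List.length_cons]
      have hlen2 : (p.dropUntil r hrmem).support.length
          = (p.dropUntil r hrmem).support.tail.length + 1 := by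
        conv_lhs => rw [hcons2]
        rw [List.length_cons]
      rw [hsupp, List.length_append, List.filter_append, List.length_append]
      have hdist : (((p.takeUntil r hrmem).support.filter (fun v => v ∈ S)).length
            + ((p.dropUntil r hrmem).support.tail.filter (fun v => v ∈ S)).length + 1) * E
          = ((p.takeUntil r hrmem).support.filter (fun v => v ∈ S)).length * E
            + (((p.dropUntil r hrmem).support.tail.filter (fun v => v ∈ S)).length + 1) * E := by
        ring
      rw [hdist, ← h2]
      have := Nat.add_le_add hb1 hb2
      omega
    · have h0 : p.support.filter (fun v => v ∈ S) = [] := by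
        rw [List.filter_eq_nil_iff]
        push_neg at hex
        intro v hv
        simpa using hex v hv
      rw [h0]
      simpa using hfree p hp (fun v hv => by push_neg at hex; exact hex v hv)

lemma kernel_bound' : ∀ (d k : ℕ), (k + 1) * 2 ^ d ≤ kernelSize d k + 1 := by
  intro d
  induction d with
  | zero => intro k; simp [kernelSize]
  | succ d ih =>
    intro k
    have h2 : 2 * (k + 1) ≤ (k + 1) ^ 3 + 1 := by nlinarith [sq_nonneg k]
    calc (k + 1) * 2 ^ (d + 1) = (2 * (k + 1)) * 2 ^ d := by ring
      _ ≤ ((k + 1) ^ 3 + 1) * 2 ^ d := Nat.mul_le_mul_right _ h2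
      _ ≤ kernelSize d ((k + 1) ^ 3) + 1 := ih _
      _ = kernelSize (d + 1) k + 1 := rfl

/-- Longest Path has a kernel of size `g(d,k)` parameterized by the size `k` of a
modulator to treedepth `d`: every graph `G` with a set `S` of at most `k` vertices
such that `td(G − S) ≤ d` has an induced subgraph `G[U]` on at most `g(d,k)` vertices
that is equivalent to `G` for Longest Path. -/
theorem longestPath_polynomial_kernel
    (d k : ℕ) {V : Type*} [Fintype V] (G : SimpleGraph V) (S : Set V)
    (hSk : S.ncard ≤ k) (hS : treedepthLE (SimpleGraph.induce Sᶜ G) d) :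
    ∃ U : Set V, U.ncard ≤ kernelSize d k ∧
      ∀ ℓ : ℕ, HasPathGE G ℓ ↔ HasPathGE (SimpleGraph.induce U G) ℓ := by
  classical
  obtain ⟨par, dep, hdep, hheight, hadj⟩ := hS
  have hfree : ∀ {a b : V} (p : G.Walk a b), p.IsPath → (∀ v ∈ p.support, v ∉ S) →
      p.support.length + 1 ≤ 2 ^ d := by
    intro a b p hp hns
    have hT : ∀ v ∈ p.support, v ∈ Sᶜ := fun v hv => hns v hv
    obtain ⟨q, hq⟩ := walk_toInduce p hT
    have hlenq : q.support.length = p.support.length := by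
      rw [← hq, List.length_map]
    have hqpath : q.IsPath := by
      rw [Walk.isPath_def]
      have hnd : (q.support.map Subtype.val).Nodup := by
        rw [hq]; exact hp.support_nodup
      exact hnd.of_map _
    have hwin : ∀ v ∈ q.support, 0 < dep v ∧ dep v ≤ 0 + d := by
      intro v _
      exact ⟨aux_dep_pos hdep v, by simpa using hheight v⟩
    have := lemB hdep hadj d q 0 hqpath hwin
    omega
  have hbound : ∀ {a b : V} (p : G.Walk a b), p.IsPath →
      p.support.length + 1 ≤ (k + 1) * 2 ^ d := by
    intro a b p hp
    have h1 := lemC (S := S) Nat.one_le_two_pow hfree p.length p le_rfl hp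
    have hc : (p.support.filter (fun v => v ∈ S)).length ≤ k := by
      have hnd : (p.support.filter (fun v => decide (v ∈ S))).Nodup :=
        hp.support_nodup.filter _
      have hsub : ↑(p.support.filter (fun v => decide (v ∈ S))).toFinset ⊆ S := by
        intro v hv
        rw [Finset.mem_coe, List.mem_toFinset, List.mem_filter] at hv
        simpa using hv.2
      have hle := Set.ncard_le_ncard hsub S.toFinite
      rw [Set.ncard_coe_finset, List.toFinset_card_of_nodup hnd] at hle
      omega
    calc p.support.length + 1
        ≤ ((p.support.filter (fun v => v ∈ S)).length + 1) * 2 ^ d := h1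
      _ ≤ (k + 1) * 2 ^ d := Nat.mul_le_mul_right _ (by omega)
  have hker := kernel_bound' d k
  rcases isEmpty_or_nonempty V with hV | hV
  · refine ⟨∅, by simp, fun ℓ => iff_of_false ?_ ?_⟩
    · rintro ⟨u, -⟩; exact hV.false u
    · rintro ⟨u, -⟩; exact hV.false u.1
  · obtain ⟨v0⟩ := hV
    have hN0 : (0 : ℕ) ∈ {n | ∃ (u v : V) (p : G.Walk u v), p.IsPath ∧ p.length = n} :=
      ⟨v0, v0, Walk.nil, Walk.IsPath.nil, rfl⟩
    have hbdd : BddAbove {n | ∃ (u v : V) (p : G.Walk u v), p.IsPath ∧ p.length = n} := by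
      refine ⟨(k + 1) * 2 ^ d, ?_⟩
      rintro n ⟨u, v, p, hp, rfl⟩
      have h1 := hbound p hp
      have h2 := p.length_support
      omega
    obtain ⟨u₀, v₀, p₀, hp₀, hlen₀⟩ := Nat.sSup_mem ⟨0, hN0⟩ hbdd
    refine ⟨{v | v ∈ p₀.support}, ?_, fun ℓ => ?_⟩
    · have hUeq : {v | v ∈ p₀.support} = ↑p₀.support.toFinset := by ext v; simp
      rw [hUeq, Set.ncard_coe_finset]
      have h1 : p₀.support.toFinset.card ≤ p₀.support.length := p₀.support.toFinset_card_le
      have h2 := hbound p₀ hp₀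
      omega
    · constructor
      · rintro ⟨u, v, q, hq, hl⟩
        have hqm : q.length ≤ sSup {n | ∃ (u v : V) (p : G.Walk u v), p.IsPath ∧ p.length = n} :=
          le_csSup hbdd ⟨u, v, q, hq, rfl⟩
        obtain ⟨q', hq'⟩ := walk_toInduce (T := {v | v ∈ p₀.support}) p₀ (fun v hv => hv)
        refine ⟨_, _, q', ?_, ?_⟩
        · rw [Walk.isPath_def]
          have hnd : (q'.support.map Subtype.val).Nodup := by
            rw [hq']; exact hp₀.support_nodup
          exact hnd.of_map _
        · have hl1 : q'.support.length = p₀.support.length := by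
            have h := congrArg List.length hq'
            rwa [List.length_map] at h
          have h2 := q'.length_support
          have h3 := p₀.length_support
          omega
      · rintro ⟨u, v, q, hq, hl⟩
        refine ⟨_, _, q.map (SimpleGraph.Embedding.induce (G := G) {v | v ∈ p₀.support}).toHom, ?_, ?_⟩
        · exact Walk.map_isPath_of_injective (SimpleGraph.Embedding.induce (G := G) {v | v ∈ p₀.support}).injective hq
        · rw [Walk.length_map]; exact hl
end
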